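/- arXiv:1210.3504 — 4 statements merged into one kernel-verified Lean document; each statement's English description precedes it below -/
import Mathlib

section
/- Let ℓ ≥ 2 and b be positive integers with b ≡ 1 (mod ℓ), and let M < N be natural numbers. Then gcd( Σ_{j=1}^{ℓ} b^{ℓ^M (ℓ-j)}, Σ_{j=1}^{ℓ} b^{ℓ^N (ℓ-j)} ) = ℓ. -/
lemma modEq_sum_aux {α : Type*} (n : ℕ) (s : Finset α) (f g : α → ℕ)
    (h : ∀ i ∈ s, f i ≡ g i [MOD n]) :
    (∑ i ∈ s, f i) ≡ (∑ i ∈ s, g i) [MOD n] := by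
  classical
  induction s using Finset.induction_on with
  | empty => simp [Nat.ModEq.refl]
  | @insert a s hx ih =>
    simp only [Finset.sum_insert hx]
    exact Nat.ModEq.add (h a (Finset.mem_insert_self a s))
      (ih fun i hi => h i (Finset.mem_insert_of_mem hi))

theorem gcd_geom_sums (ℓ b M N : ℕ) (hℓ : 2 ≤ ℓ) (hb : 0 < b)
    (hbℓ : b ≡ 1 [MOD ℓ]) (hMN : M < N) :
    Nat.gcd (∑ j ∈ Finset.range ℓ, b ^ (ℓ ^ M * j))
      (∑ j ∈ Finset.range ℓ, b ^ (ℓ ^ N * j)) = ℓ := by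
  set S := ∑ j ∈ Finset.range ℓ, b ^ (ℓ ^ M * j) with hS
  set T := ∑ j ∈ Finset.range ℓ, b ^ (ℓ ^ N * j) with hT
  -- ℓ divides S
  have hℓS : ℓ ∣ S := by
    have h1 : S ≡ (∑ _j ∈ Finset.range ℓ, 1) [MOD ℓ] :=
      modEq_sum_aux ℓ _ _ _ (fun i _ => by
        simpa using (hbℓ.pow (ℓ ^ M * i)))
    have h2 : (∑ _j ∈ Finset.range ℓ, 1 : ℕ) = ℓ := by simp
    rw [h2] at h1
    exact (Nat.modEq_zero_iff_dvd).mp (h1.trans (Nat.modEq_zero_iff_dvd.mpr dvd_rfl))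
  -- S divides b^(ℓ^(M+1)) - 1, via integer geometric sum identity
  have hBpos : 1 ≤ b ^ (ℓ ^ (M+1)) := Nat.one_le_pow _ _ hb
  have hSdvd : S ∣ b ^ (ℓ ^ (M+1)) - 1 := by
    have : (S : ℤ) ∣ (b : ℤ) ^ (ℓ ^ (M+1)) - 1 := by
      have hgeom := geom_sum_mul ((b : ℤ) ^ (ℓ ^ M)) ℓ
      have heq : (S : ℤ) * ((b : ℤ) ^ (ℓ ^ M) - 1) = (b : ℤ) ^ (ℓ ^ (M+1)) - 1 := by
        rw [hS]
        push_cast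
        rw [pow_succ, pow_mul, ← hgeom]
        congr 1
        exact Finset.sum_congr rfl fun i _ => by rw [← pow_mul]
      exact ⟨_, heq.symm⟩
    have h2 : ((b ^ (ℓ ^ (M+1)) - 1 : ℕ) : ℤ) = (b : ℤ) ^ (ℓ ^ (M+1)) - 1 := by
      push_cast [hBpos]; ring
    exact Int.natCast_dvd_natCast.mp (by rw [h2]; exact this)
  -- hence b^(ℓ^N) ≡ 1 [MOD S]
  have hbN : b ^ (ℓ ^ N) ≡ 1 [MOD S] := by
    have h1 : b ^ (ℓ ^ (M+1)) ≡ 1 [MOD S] :=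
      (Nat.modEq_iff_dvd' hBpos).mpr hSdvd |>.symm
    have hN : ℓ ^ N = ℓ ^ (M+1) * ℓ ^ (N - (M+1)) := by
      rw [← pow_add]
      congr 1
      omega
    calc b ^ (ℓ ^ N) = (b ^ (ℓ ^ (M+1))) ^ (ℓ ^ (N - (M+1))) := by
          rw [← pow_mul, hN]
      _ ≡ 1 ^ (ℓ ^ (N - (M+1))) [MOD S] := h1.pow _
      _ = 1 := one_pow _
  -- T ≡ ℓ [MOD S]
  have hTℓ : T ≡ ℓ [MOD S] := by
    have h1 : T ≡ (∑ _j ∈ Finset.range ℓ, 1) [MOD S] :=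
      modEq_sum_aux S _ _ _ (fun i _ => by
        have := hbN.pow i
        simpa [← pow_mul, mul_comm] using this)
    simpa using h1
  -- gcd S T = gcd S ℓ
  have hgcd : Nat.gcd S T = Nat.gcd S ℓ := by
    have hSpos : 0 < S := by
      have : 0 < ℓ := by omega
      calc 0 < ∑ _j ∈ Finset.range ℓ, 1 := by simpa using this
        _ ≤ S := Finset.sum_le_sum fun i _ => Nat.one_le_pow _ _ hb
    have h' : T % S = ℓ % S := hTℓ
    rw [Nat.gcd_rec S T, h', ← Nat.gcd_rec S ℓ]
  rw [hgcd]
  exact Nat.gcd_eq_right hℓS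
end

section
/- Let ℓ ≥ 2 and b be positive integers with b ≡ 1 (mod ℓ), and let M < N be natural numbers. Then (1/ℓ)·Σ_{j=1}^{ℓ} b^{ℓ^M (ℓ-j)} and (1/ℓ)·Σ_{j=1}^{ℓ} b^{ℓ^N (ℓ-j)} are coprime integers. -/
private lemma sum_sub_card_dvd (n ℓ : ℕ) (c : ℤ) (h : (n : ℤ) ∣ c - 1) :
    (n : ℤ) ∣ (∑ j ∈ Finset.range ℓ, c ^ j) - ℓ := by
  have heq : (∑ j ∈ Finset.range ℓ, c ^ j) - ℓ = ∑ j ∈ Finset.range ℓ, (c ^ j - 1) := by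
    rw [Finset.sum_sub_distrib, Finset.sum_const, Finset.card_range]
    ring
  rw [heq]
  exact Finset.dvd_sum fun j _ =>
    h.trans (by simpa using sub_dvd_pow_sub_pow c 1 j)

theorem coprime_geom_sums_div (ℓ b M N : ℕ) (hℓ : 2 ≤ ℓ) (hb : 0 < b)
    (hbℓ : b ≡ 1 [MOD ℓ]) (hMN : M < N) :
    Nat.Coprime ((∑ j ∈ Finset.range ℓ, b ^ (ℓ ^ M * j)) / ℓ)
      ((∑ j ∈ Finset.range ℓ, b ^ (ℓ ^ N * j)) / ℓ) := by
  have hℓ0 : ℓ ≠ 0 := by omega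
  have hb1 : (ℓ : ℤ) ∣ (b : ℤ) - 1 := by
    have := (Nat.modEq_iff_dvd (n := ℓ)).mp hbℓ.symm
    simpa using this
  set SM := ∑ j ∈ Finset.range ℓ, b ^ (ℓ ^ M * j) with hSM
  set SN := ∑ j ∈ Finset.range ℓ, b ^ (ℓ ^ N * j) with hSN
  have castS : ∀ K : ℕ, ((∑ j ∈ Finset.range ℓ, b ^ (ℓ ^ K * j) : ℕ) : ℤ)
      = ∑ j ∈ Finset.range ℓ, ((b : ℤ) ^ (ℓ ^ K)) ^ j := by
    intro K
    push_cast [pow_mul]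
    rfl
  have hpow1 : ∀ K : ℕ, (ℓ : ℤ) ∣ (b : ℤ) ^ (ℓ ^ K) - 1 :=
    fun K => hb1.trans (by simpa using sub_dvd_pow_sub_pow (b : ℤ) 1 (ℓ ^ K))
  have hdvd : ∀ K : ℕ, ℓ ∣ ∑ j ∈ Finset.range ℓ, b ^ (ℓ ^ K * j) := by
    intro K
    have h1 : (ℓ : ℤ) ∣ ((∑ j ∈ Finset.range ℓ, b ^ (ℓ ^ K * j) : ℕ) : ℤ) := by
      rw [castS K]
      have h2 := sum_sub_card_dvd ℓ ℓ ((b : ℤ) ^ (ℓ ^ K)) (hpow1 K)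
      have h3 := dvd_add h2 (dvd_refl (ℓ : ℤ))
      simpa using h3
    exact_mod_cast h1
  set A := SM / ℓ with hA
  set B := SN / ℓ with hB
  have hSMA : SM = ℓ * A := (Nat.mul_div_cancel' (hdvd M)).symm
  have hSNB : SN = ℓ * B := (Nat.mul_div_cancel' (hdvd N)).symm
  -- ℓ^2 ∣ b^(ℓ^N) - 1
  have hsq : ((ℓ : ℤ) * ℓ) ∣ (b : ℤ) ^ (ℓ ^ N) - 1 := by
    have hgeo : ((b : ℤ) ^ ℓ - 1) = (∑ j ∈ Finset.range ℓ, (b : ℤ) ^ j) * ((b : ℤ) - 1) :=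
      (geom_sum_mul _ _).symm
    have hsum : (ℓ : ℤ) ∣ ∑ j ∈ Finset.range ℓ, (b : ℤ) ^ j := by
      have h2 := sum_sub_card_dvd ℓ ℓ (b : ℤ) hb1
      have h3 := dvd_add h2 (dvd_refl (ℓ : ℤ))
      simpa using h3
    have hsq1 : ((ℓ : ℤ) * ℓ) ∣ (b : ℤ) ^ ℓ - 1 := by
      rw [hgeo]; exact mul_dvd_mul hsum hb1
    have hrw : (b : ℤ) ^ (ℓ ^ N) = ((b : ℤ) ^ ℓ) ^ (ℓ ^ (N - 1)) := by
      rw [← pow_mul]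
      congr 1
      rw [← pow_succ']
      congr 1
      omega
    rw [hrw]
    exact hsq1.trans (by simpa using sub_dvd_pow_sub_pow ((b : ℤ) ^ ℓ) 1 (ℓ ^ (N - 1)))
  -- hence B ≡ 1 [MOD ℓ]
  have hB1 : B ≡ 1 [MOD ℓ] := by
    have hmod : SN ≡ ℓ [MOD ℓ * ℓ] := by
      rw [Nat.modEq_iff_dvd]
      have h1 := sum_sub_card_dvd (ℓ * ℓ) ℓ ((b : ℤ) ^ (ℓ ^ N)) (by exact_mod_cast hsq)
      rw [← castS N] at h1
      have h2 : ((ℓ : ℤ) * ℓ) ∣ (ℓ : ℤ) - (SN : ℤ) := (dvd_sub_comm).mp h1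
      exact_mod_cast h2
    have h3 : ℓ * B ≡ ℓ * 1 [MOD ℓ * ℓ] := by
      rw [← hSNB, mul_one]; exact hmod
    exact Nat.ModEq.mul_left_cancel' hℓ0 h3
  -- main argument
  by_contra hcop
  obtain ⟨p, hp, hpg⟩ := Nat.exists_prime_and_dvd hcop
  have hpA : p ∣ A := hpg.trans (Nat.gcd_dvd_left _ _)
  have hpB : p ∣ B := hpg.trans (Nat.gcd_dvd_right _ _)
  have hpSM : (p : ℤ) ∣ ((SM : ℕ) : ℤ) := by
    exact_mod_cast (hpA.mul_left ℓ).trans (dvd_of_eq hSMA.symm)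
  have hpPow : (p : ℤ) ∣ (b : ℤ) ^ (ℓ ^ N) - 1 := by
    have h1 : ((SM : ℕ) : ℤ) ∣ (b : ℤ) ^ (ℓ ^ (M + 1)) - 1 := by
      rw [castS M]
      have hg := geom_sum_mul ((b : ℤ) ^ (ℓ ^ M)) ℓ
      rw [← pow_mul, ← pow_succ] at hg
      exact ⟨_, hg.symm⟩
    have h2 : (b : ℤ) ^ (ℓ ^ (M + 1)) - 1 ∣ (b : ℤ) ^ (ℓ ^ N) - 1 := by
      have hrw : (b : ℤ) ^ (ℓ ^ N) = ((b : ℤ) ^ (ℓ ^ (M + 1))) ^ (ℓ ^ (N - (M + 1))) := by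
        rw [← pow_mul, ← pow_add]
        have he : M + 1 + (N - (M + 1)) = N := by omega
        rw [he]
      rw [hrw]
      simpa using sub_dvd_pow_sub_pow ((b : ℤ) ^ (ℓ ^ (M + 1))) 1 (ℓ ^ (N - (M + 1)))
    exact (hpSM.trans h1).trans h2
  have hpℓ : p ∣ ℓ := by
    have h1 : (p : ℤ) ∣ ((SN : ℕ) : ℤ) - ℓ := by
      rw [castS N]
      exact sum_sub_card_dvd p ℓ ((b : ℤ) ^ (ℓ ^ N)) hpPow
    have h2 : (p : ℤ) ∣ ((SN : ℕ) : ℤ) := by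
      exact_mod_cast (hpB.mul_left ℓ).trans (dvd_of_eq hSNB.symm)
    have h3 : (p : ℤ) ∣ (ℓ : ℤ) := by
      have := dvd_sub h2 h1
      simpa [sub_sub_cancel] using this
    exact_mod_cast h3
  have hBp : B ≡ 1 [MOD p] := hB1.of_dvd hpℓ
  have h0 : B % p = 0 := by
    obtain ⟨k, hk⟩ := hpB
    rw [hk]
    simp [Nat.mul_mod_right]
  have h1 : 1 % p = 1 := Nat.mod_eq_of_lt hp.one_lt
  rw [Nat.ModEq, h0, h1] at hBp
  exact absurd hBp (by omega)
end

section
/- Let q be a prime power with q ≡ 1 (mod 3). If every element of the form β³ - 1, for β ∈ 𝔽_q, is a cube in 𝔽_q, then q = 4. -/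
theorem cube_shift_forces_four (F : Type*) [Field F] [Fintype F]
    (hq : Fintype.card F % 3 = 1)
    (h : ∀ β : F, ∃ y : F, y ^ 3 = β ^ 3 - 1) :
    Fintype.card F = 4 := by
  classical
  set q := Fintype.card F with hqdef
  have hq2 : 2 ≤ q := Fintype.one_lt_card
  -- The set of cubes
  set C : Set F := Set.range (fun x : F => x ^ 3) with hCdef
  have hCfin : C.Finite := Set.toFinite _
  have hmaps : Set.MapsTo (fun a : F => a - 1) C C := by
    rintro a ⟨x, rfl⟩
    obtain ⟨y, hy⟩ := h x
    exact ⟨y, hy⟩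
  have hinj : Set.InjOn (fun a : F => a - 1) C := by
    intro a _ b _ hab
    simpa using hab
  have hbij := (Set.Finite.injOn_iff_bijOn_of_mapsTo hCfin hmaps).1 hinj
  have hplus : ∀ a ∈ C, a + 1 ∈ C := by
    intro a ha
    obtain ⟨b, hb, hb1⟩ := hbij.surjOn ha
    have hb2 : b = a + 1 := sub_eq_iff_eq_add.mp hb1
    rwa [hb2] at hb
  -- The cubes form a subfield
  have hadd : ∀ a ∈ C, ∀ b ∈ C, a + b ∈ C := by
    rintro _ ⟨u, rfl⟩ _ ⟨v, rfl⟩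
    simp only
    by_cases hv : v = (0 : F)
    · subst hv
      exact ⟨u, by ring⟩
    · obtain ⟨w, hw⟩ := hplus _ ⟨u * v⁻¹, rfl⟩
      refine ⟨v * w, ?_⟩
      have hw' : w ^ 3 = (u * v⁻¹) ^ 3 + 1 := hw
      show (v * w) ^ 3 = u ^ 3 + v ^ 3
      have hvw : (v * w) ^ 3 = v ^ 3 * w ^ 3 := by ring
      rw [hvw, hw']
      field_simp
  let K : Subfield F :=
  { carrier := C
    mul_mem' := by
      rintro _ _ ⟨u, rfl⟩ ⟨v, rfl⟩
      exact ⟨u * v, by ring⟩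
    one_mem' := ⟨1, one_pow 3⟩
    add_mem' := fun ha hb => hadd _ ha _ hb
    zero_mem' := ⟨0, by norm_num⟩
    neg_mem' := by
      rintro _ ⟨u, rfl⟩
      exact ⟨-u, by ring⟩
    inv_mem' := by
      rintro _ ⟨u, rfl⟩
      exact ⟨u⁻¹, by rw [← inv_pow]⟩ }
  -- a primitive cube root of unity
  haveI : Fact (Nat.Prime 3) := ⟨by norm_num⟩
  have hdvd : 3 ∣ Fintype.card Fˣ := by
    rw [Fintype.card_units]
    omega
  obtain ⟨u, hu⟩ := exists_prime_orderOf_dvd_card 3 hdvd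
  set ζ : F := (u : F) with hzdef
  have hz0 : ζ ≠ 0 := Units.ne_zero u
  have hz3 : ζ ^ 3 = 1 := by
    have h1 : u ^ 3 = 1 := by
      rw [← hu]; exact pow_orderOf_eq_one u
    have := congrArg (Units.val) h1
    simpa using this
  have hz1 : ζ ≠ 1 := by
    intro hz
    have : u = 1 := Units.val_eq_one.mp hz
    rw [this, orderOf_one] at hu
    omega
  have hz2 : ζ ^ 2 ≠ 1 := by
    intro hz
    have h1 : u ^ 2 = 1 := by
      apply Units.ext
      rw [Units.val_pow_eq_pow_val, Units.val_one]
      exact hz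
    have := orderOf_dvd_of_pow_eq_one h1
    rw [hu] at this
    omega
  have hzz : ζ ^ 2 ≠ ζ := by
    intro hz
    have : ζ * (ζ - 1) = 0 := by linear_combination hz
    rcases mul_eq_zero.mp this with h1 | h1
    · exact hz0 h1
    · exact hz1 (sub_eq_zero.mp h1)
  have hsum : ζ ^ 2 + ζ + 1 = 0 := by
    have h0 : (ζ - 1) * (ζ ^ 2 + ζ + 1) = 0 := by linear_combination hz3
    rcases mul_eq_zero.mp h0 with h1 | h1
    · exact absurd (sub_eq_zero.mp h1) hz1
    · exact h1
  -- counting the cubes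
  set s : Finset F := Finset.image (fun x : F => x ^ 3) Finset.univ with hsdef
  have h0s : (0 : F) ∈ s := Finset.mem_image.2 ⟨0, Finset.mem_univ _, by norm_num⟩
  have hsumcard : q = ∑ b ∈ s, (Finset.univ.filter (fun x : F => x ^ 3 = b)).card := by
    simpa using Finset.card_eq_sum_card_image (fun x : F => x ^ 3) Finset.univ
  have hfib0 : (Finset.univ.filter (fun x : F => x ^ 3 = (0 : F))) = {0} := by
    ext x
    simp [pow_eq_zero_iff]
  have hfib : ∀ b ∈ s.erase 0, (Finset.univ.filter (fun x : F => x ^ 3 = b)).card = 3 := by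
    intro b hb
    have hb0 : b ≠ 0 := (Finset.mem_erase.mp hb).1
    obtain ⟨a, -, rfl⟩ := Finset.mem_image.mp (Finset.mem_erase.mp hb).2
    have ha : a ≠ 0 := by
      rintro rfl; exact hb0 (by norm_num)
    have cancel : ∀ {c d : F}, c * a = d * a → c = d := by
      intro c d hcd; exact mul_right_cancel₀ ha hcd
    have hfeq : (Finset.univ.filter (fun x : F => x ^ 3 = a ^ 3))
        = {a, ζ * a, ζ ^ 2 * a} := by
      ext x
      simp only [Finset.mem_filter, Finset.mem_univ, true_and, Finset.mem_insert,
        Finset.mem_singleton]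
      constructor
      · intro hx
        have hfact : (x - a) * (x - ζ * a) * (x - ζ ^ 2 * a) = 0 := by
          linear_combination hx + (a ^ 2 * x - a * x ^ 2) * hsum + (a ^ 2 * x - a ^ 3) * hz3
        rcases mul_eq_zero.mp hfact with h1 | h1
        · rcases mul_eq_zero.mp h1 with h2 | h2
          · exact Or.inl (sub_eq_zero.mp h2)
          · exact Or.inr (Or.inl (sub_eq_zero.mp h2))
        · exact Or.inr (Or.inr (sub_eq_zero.mp h1))
      · rintro (rfl | rfl | rfl)
        · rfl
        · rw [mul_pow, hz3, one_mul]
        · rw [mul_pow, ← pow_mul, show 2 * 3 = 3 * 2 by rfl, pow_mul, hz3, one_pow, one_mul]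
    rw [hfeq]
    rw [Finset.card_insert_of_notMem, Finset.card_insert_of_notMem, Finset.card_singleton]
    · simp only [Finset.mem_singleton]
      intro hh
      exact hzz (cancel hh).symm
    · simp only [Finset.mem_insert, Finset.mem_singleton]
      rintro (hh | hh)
      · exact hz1 (cancel (by rw [one_mul]; exact hh)).symm
      · exact hz2 (cancel (by rw [one_mul]; exact hh)).symm
  have hcount : q = 1 + 3 * (s.card - 1) := by
    rw [hsumcard, ← Finset.add_sum_erase _ _ h0s, hfib0,
      Finset.sum_congr rfl hfib, Finset.sum_const, smul_eq_mul,
      Finset.card_erase_of_mem h0s, Finset.card_singleton, mul_comm]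
  have hscard1 : 1 ≤ s.card := Finset.card_pos.mpr ⟨0, h0s⟩
  have hsq : 3 * s.card = q + 2 := by omega
  -- identify the cardinality of K with s.card
  have hKs : (K : Set F) = (s : Set F) := by
    ext x
    constructor
    · rintro ⟨y, rfl⟩
      exact Finset.mem_coe.mpr (Finset.mem_image.mpr ⟨y, Finset.mem_univ _, rfl⟩)
    · intro hx
      obtain ⟨y, -, rfl⟩ := Finset.mem_image.mp (Finset.mem_coe.mp hx)
      exact ⟨y, rfl⟩
  have hdK : Nat.card K = s.card := by
    have e : Nat.card (K : Set F) = Nat.card (s : Set F) := Nat.card_congr (Equiv.setCongr hKs)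
    rw [Nat.card_coe_set_eq, Nat.card_coe_set_eq, Set.ncard_coe_finset] at e
    exact e
  -- F is a vector space over K
  haveI : Fintype K := Fintype.ofFinite K
  have hpow : q = (Nat.card K) ^ (Module.finrank K F) := by
    rw [Nat.card_eq_fintype_card, hqdef]
    exact Module.card_eq_pow_finrank (K := K) (V := F)
  set d := Nat.card K with hddef
  set k := Module.finrank K F with hkdef
  have hd2 : 2 ≤ d := by omega
  -- solve d ^ k = 3 d - 2
  rcases Nat.lt_or_ge k 3 with hk3 | hk3
  · interval_cases k
    · simp at hpow; omega
    · simp at hpow; omega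
    · have : d = 2 := by nlinarith [hpow, hsq]
      rw [hpow, this]; norm_num
  · exfalso
    have h1 : d ^ 3 ≤ d ^ k := Nat.pow_le_pow_right (by omega) hk3
    have h2 : d ^ 3 = d * d * d := by ring
    nlinarith [hpow, hsq, h1, h2, hd2]
end

section
/- Let q ≡ 1 (mod 4) be a prime power, and let δ ∈ 𝔽_{q²} satisfy the minimal polynomial Y² - (48d + 64d²)Y - 64d over 𝔽_{q} for some d ∈ 𝔽_q that is a non-square. Then the norm of δ from 𝔽_{q²} to 𝔽_q equals -64d, and δ^{(q²-1)/2} = -1, i.e., δ is a non-square in 𝔽_{q²}. -/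
theorem norm_and_nonsquare (F K : Type*) [Field F] [Fintype F] [Field K] [Fintype K]
    [Algebra F K] (hq : Fintype.card F % 4 = 1)
    (hK : Fintype.card K = Fintype.card F ^ 2)
    (d : F) (hd : ¬∃ y : F, y ^ 2 = d)
    (δ : K) (hδ : δ ∉ Set.range (algebraMap F K))
    (hmin : δ ^ 2 - algebraMap F K (48 * d + 64 * d ^ 2) * δ - algebraMap F K (64 * d) = 0) :
    δ ^ (Fintype.card F + 1) = algebraMap F K (-(64 * d)) ∧
      δ ^ ((Fintype.card F ^ 2 - 1) / 2) = -1 := by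
  classical
  set q := Fintype.card F with hqdef
  have hq1 : 1 < q := Fintype.one_lt_card
  -- characteristic ≠ 2
  have hchar2 : ringChar F ≠ 2 := by
    intro h
    have := FiniteField.even_card_of_char_two h
    omega
  have h2 : (2 : F) ≠ 0 := Ring.two_ne_zero hchar2
  have h8 : (8 : F) ≠ 0 := by
    intro h
    apply pow_ne_zero 3 h2
    rw [show ((2:F)^3 = 8) by norm_num, h]
  have h64 : (64 : F) ≠ 0 := by
    intro h
    apply h8
    have : (8 : F) * 8 = 0 := by rw [show ((8:F)*8 = 64) by norm_num, h]
    exact (mul_self_eq_zero).mp this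
  -- d ≠ 0
  have hd0 : d ≠ 0 := by
    intro h; exact hd ⟨0, by simp [h]⟩
  -- -(64*d) is a nonsquare in F
  obtain ⟨i, hi⟩ : IsSquare (-1 : F) := by
    rw [FiniteField.isSquare_neg_one_iff]; omega
  have hns : ¬ IsSquare (-(64 * d)) := by
    rintro ⟨y, hy⟩
    apply hd
    refine ⟨i * y / 8, ?_⟩
    have h1 : (i * y / 8) ^ 2 = (i * i) * (y * y) / 64 := by
      field_simp; ring
    rw [h1, ← hi, ← hy]
    field_simp
  have h64d : (-(64 * d) : F) ≠ 0 := by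
    simp [h64, hd0]
  have hpowF : (-(64 * d)) ^ (q / 2) = (-1 : F) := by
    rcases FiniteField.pow_dichotomy hchar2 h64d with h | h
    · exact absurd ((FiniteField.isSquare_iff hchar2 h64d).mpr h) hns
    · exact h
  -- Frobenius setup
  set p := ringChar F with hpdef
  haveI : CharP F p := ringChar.charP F
  have hp : p.Prime := CharP.char_is_prime F p
  haveI : CharP K p := charP_of_injective_algebraMap (algebraMap F K).injective p
  haveI := Fact.mk hp
  obtain ⟨n, -, hqpn⟩ := FiniteField.card F p
  set ψ : K →+* K := iterateFrobenius K p n with hψdef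
  have hψ : ∀ x : K, ψ x = x ^ q := by
    intro x; rw [hψdef, iterateFrobenius_def, ← hqpn]
  have hfix : ∀ a : F, (algebraMap F K a) ^ q = algebraMap F K a := by
    intro a; rw [← map_pow, FiniteField.pow_card]
  -- δ^q is a root of the same quadratic
  set s : K := algebraMap F K (48 * d + 64 * d ^ 2) with hs
  set t : K := algebraMap F K (64 * d) with ht
  have hroot' : (δ ^ q) ^ 2 - s * (δ ^ q) - t = 0 := by
    have h := congrArg ψ hmin
    rw [map_sub, map_sub, map_mul, map_pow, map_zero, hψ, hψ, hψ] at h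
    have hsq : s ^ q = s := hfix _
    have htq : t ^ q = t := hfix _
    rw [hsq, htq] at h
    exact h
  -- δ^q ≠ δ
  have hne : δ ^ q ≠ δ := by
    intro h
    apply hδ
    set P : Polynomial K := Polynomial.X ^ q - Polynomial.X with hP
    have hP0 : P ≠ 0 := FiniteField.X_pow_card_sub_X_ne_zero K hq1
    have hdeg : P.natDegree = q := FiniteField.X_pow_card_sub_X_natDegree_eq K hq1
    set T : Finset K := (Finset.univ.image (algebraMap F K)) ∪ {δ} with hT
    have hTsub : T ⊆ P.roots.toFinset := by
      intro x hx
      rw [Multiset.mem_toFinset, Polynomial.mem_roots hP0]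
      have hx' : x ^ q = x := by
        rcases Finset.mem_union.mp hx with hx | hx
        · obtain ⟨a, -, rfl⟩ := Finset.mem_image.mp hx
          exact hfix a
        · rw [Finset.mem_singleton.mp hx]; exact h
      simp [hP, Polynomial.IsRoot, hx']
    have hcardT : T.card = q + 1 := by
      rw [hT, Finset.card_union_of_disjoint, Finset.card_image_of_injective _
        (algebraMap F K).injective, Finset.card_singleton, Finset.card_univ]
      · simp only [Finset.disjoint_singleton_right, Finset.mem_image]
        rintro ⟨a, -, ha⟩
        exact hδ ⟨a, ha⟩
    have := (Finset.card_le_card hTsub).trans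
      ((Multiset.toFinset_card_le _).trans ((Polynomial.card_roots' P).trans_eq hdeg))
    omega
  -- sum of roots
  have hsum : δ ^ q + δ = s := by
    have hfactor : (δ ^ q - δ) * (δ ^ q + δ - s) = 0 := by
      linear_combination hroot' - hmin
    rcases mul_eq_zero.mp hfactor with h | h
    · exact absurd (sub_eq_zero.mp h) hne
    · linear_combination h
  -- product of roots : δ^(q+1) = -t
  have hprod : δ ^ (q + 1) = -t := by
    have : δ ^ (q + 1) = δ ^ q * δ := by rw [pow_succ]
    rw [this]
    have hδq : δ ^ q = s - δ := by linear_combination hsum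
    rw [hδq]
    linear_combination -hmin
  have hpart1 : δ ^ (q + 1) = algebraMap F K (-(64 * d)) := by
    rw [hprod, ht, map_neg]
  refine ⟨hpart1, ?_⟩
  -- part 2
  have hq2 : q % 2 = 1 := by omega
  have hsplit : (q ^ 2 - 1) / 2 = (q + 1) * (q / 2) := by
    have h1 : q ^ 2 - 1 = (q + 1) * (q - 1) := by
      have : q ^ 2 = q * q := sq q
      rw [this, Nat.mul_sub_one, Nat.add_one_mul]
      omega
    have h2' : q - 1 = 2 * (q / 2) := by omega
    rw [h1, h2', show (q + 1) * (2 * (q / 2)) = 2 * ((q + 1) * (q / 2)) by ring]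
    exact Nat.mul_div_cancel_left _ (by norm_num)
  rw [hsplit, pow_mul, hpart1, ← map_pow, hpowF, map_neg, map_one]
end
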